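/- (Oriented regions are nonempty and connected.) Let n ≥ 2. For every word (i₁,…,iₙ) listing each element of {1,…,n} exactly once and every choice of signs ε : {1,…,n} → {−1,+1}, the oriented region R(ε_{i₁}i₁,…,ε_{iₙ}iₙ) is a nonempty connected subset of the space of real 2×n matrices. -/

import Mathlib

namespace OSD

/-- `p_{ij}(C) = C_{1,i}·C_{2,j} − C_{1,j}·C_{2,i}` for a real `2×n` matrix `C`. -/
def pluck {n : ℕ} (C : Matrix (Fin 2) (Fin n) ℝ) (i j : Fin n) : ℝ :=
  C 0 i * C 1 j - C 0 j * C 1 i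

/-- The oriented region `R(ε_{i₁}i₁, …, ε_{iₙ}iₙ)` attached to the word
`(i₁,…,iₙ) = (w 1, …, w n)` and the signs `ε`: the set of real `2×n` matrices `C` of
rank `2` with `ε_{i_a}·ε_{i_b}·p_{i_a i_b}(C) ≥ 0` for all positions `a < b`. -/
def orientedRegion {n : ℕ} (w : Equiv.Perm (Fin n)) (ε : Fin n → ℝ) :
    Set (Matrix (Fin 2) (Fin n) ℝ) :=
  {C | C.rank = 2 ∧ ∀ a b : Fin n, a < b → 0 ≤ ε (w a) * ε (w b) * pluck C (w a) (w b)}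

end OSD


open OSD

lemma rank_eq_two_iff {n : ℕ} (C : Matrix (Fin 2) (Fin n) ℝ) :
    C.rank = 2 ↔ ∃ i j, pluck C i j ≠ 0 := by
  constructor
  · intro hr
    by_contra h
    push_neg at h
    by_cases hC : C = 0
    · rw [hC, Matrix.rank_zero] at hr; omega
    · have hcol : ∃ q : Fin n, C.transpose q ≠ 0 := by
        by_contra hq
        push_neg at hq
        apply hC
        ext i j
        have := congrFun (hq j) i
        simpa using this
      obtain ⟨q, hq⟩ := hcol
      have hle : LinearMap.range C.mulVecLin ≤ Submodule.span ℝ {C.transpose q} := by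
        rw [Matrix.range_mulVecLin, Submodule.span_le]
        rintro _ ⟨j, rfl⟩
        rw [SetLike.mem_coe, Submodule.mem_span_singleton]
        have hpl : C 0 q * C 1 j - C 0 j * C 1 q = 0 := by
          have := h q j; simpa [pluck] using this
        by_cases h0 : C 0 q ≠ 0
        · refine ⟨C 0 j / C 0 q, ?_⟩
          funext i
          fin_cases i <;> simp [Matrix.transpose_apply] <;> field_simp <;> linarith [hpl]
        · push_neg at h0
          have h1 : C 1 q ≠ 0 := by
            intro h1
            apply hq; funext i; fin_cases i <;> simp [Matrix.transpose_apply, h0, h1]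
          refine ⟨C 1 j / C 1 q, ?_⟩
          funext i
          fin_cases i <;> simp [Matrix.transpose_apply] <;> field_simp <;> nlinarith [hpl]
      have hfr : C.rank ≤ 1 := by
        have := Submodule.finrank_mono hle
        rw [finrank_span_singleton hq] at this
        exact this
      omega
  · rintro ⟨p, q, hpq⟩
    have hne : p ≠ q := by rintro rfl; exact hpq (by simp [pluck])
    have hsurj : Function.Surjective C.mulVecLin := by
      intro y
      set d := pluck C p q with hd
      refine ⟨(fun j => if j = p then (y 0 * C 1 q - C 0 q * y 1) / d
        else if j = q then (C 0 p * y 1 - y 0 * C 1 p) / d else 0), ?_⟩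
      have hmv : ∀ i, (C.mulVecLin fun j => if j = p then (y 0 * C 1 q - C 0 q * y 1) / d
          else if j = q then (C 0 p * y 1 - y 0 * C 1 p) / d else 0) i
          = C i p * ((y 0 * C 1 q - C 0 q * y 1) / d) + C i q * ((C 0 p * y 1 - y 0 * C 1 p) / d) := by
        intro i
        rw [Matrix.mulVecLin_apply, Matrix.mulVec, dotProduct]
        rw [Finset.sum_eq_add_of_mem p q (Finset.mem_univ _) (Finset.mem_univ _) hne]
        · simp [hne, Ne.symm hne]
        · intro c _ hc
          simp [hc.1, hc.2]
      funext i
      rw [hmv]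
      have hd0 : d ≠ 0 := hpq
      fin_cases i <;> (simp only [Fin.zero_eta, Fin.mk_one]; field_simp; simp only [hd, pluck]; ring)
    have : LinearMap.range C.mulVecLin = ⊤ := LinearMap.range_eq_top.mpr hsurj
    rw [Matrix.rank, this, finrank_top, Module.finrank_pi]
    simp

/-! ### helpers -/

noncomputable section

def e1 : Fin 2 → ℝ := ![1, 0]
def e2 : Fin 2 → ℝ := ![0, 1]
def perp (x : Fin 2 → ℝ) : Fin 2 → ℝ := ![-x 1, x 0]
def cross (x y : Fin 2 → ℝ) : ℝ := x 0 * y 1 - y 0 * x 1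

def cm {n : ℕ} (c : Fin n → Fin 2 → ℝ) : Matrix (Fin 2) (Fin n) ℝ := Matrix.of fun i j => c j i

lemma pluck_cm {n : ℕ} (c : Fin n → Fin 2 → ℝ) (a b : Fin n) :
    pluck (cm c) a b = cross (c a) (c b) := rfl

@[simp] lemma cross_e1_e2 : cross e1 e2 = 1 := by simp [cross, e1, e2]

lemma cross_perp (x : Fin 2 → ℝ) : cross x (perp x) = x 0 ^ 2 + x 1 ^ 2 := by
  simp [cross, perp]; ring

def R0 (n : ℕ) : Set (Matrix (Fin 2) (Fin n) ℝ) :=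
  {C | C.rank = 2 ∧ ∀ a b : Fin n, a < b → 0 ≤ pluck C a b}

lemma mem_R0_of {n : ℕ} (c : Fin n → Fin 2 → ℝ)
    (h1 : ∃ a b, a < b ∧ cross (c a) (c b) ≠ 0)
    (h2 : ∀ a b, a < b → 0 ≤ cross (c a) (c b)) : cm c ∈ R0 n := by
  constructor
  · rw [rank_eq_two_iff]
    obtain ⟨a, b, _, h⟩ := h1
    exact ⟨a, b, by rwa [pluck_cm]⟩
  · intro a b hab
    rw [pluck_cm]
    exact h2 a b hab

lemma wedge_mem {n : ℕ} {c : Fin n → Fin 2 → ℝ} {x y : Fin 2 → ℝ} {α β : Fin n → ℝ}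
    (hc : ∀ j, c j = α j • x + β j • y) (hxy : 0 ≤ cross x y)
    (hα : ∀ j, 0 ≤ α j) (hβ : ∀ j, 0 ≤ β j)
    (horder : ∀ a b, a < b → β a * α b = 0)
    {a0 b0 : Fin n} (hab : a0 < b0) (hw : α a0 * β b0 * cross x y ≠ 0) :
    cm c ∈ R0 n := by
  have key : ∀ a b, cross (c a) (c b) = (α a * β b - α b * β a) * cross x y := by
    intro a b
    rw [hc a, hc b]
    simp [cross]
    ring
  refine mem_R0_of _ ⟨a0, b0, hab, ?_⟩ ?_
  · rw [key, show α b0 * β a0 = 0 from by linear_combination horder a0 b0 hab, sub_zero]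
    exact hw
  · intro a b hab'
    rw [key, show α b * β a = 0 from by linear_combination horder a b hab', sub_zero]
    exact mul_nonneg (mul_nonneg (hα a) (hβ b)) hxy

lemma scale_mem {n : ℕ} {E : Matrix (Fin 2) (Fin n) ℝ} (hE : E ∈ R0 n)
    {c : Fin n → Fin 2 → ℝ} {s : Fin n → ℝ} (hc : ∀ j i, c j i = s j * E i j)
    (hs : ∀ j, 0 ≤ s j) {a0 b0 : Fin n} (hab : a0 < b0)
    (hw : s a0 * s b0 * pluck E a0 b0 ≠ 0) : cm c ∈ R0 n := by
  have key : ∀ a b, cross (c a) (c b) = s a * s b * pluck E a b := by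
    intro a b
    simp only [cross, hc, pluck]
    ring
  refine mem_R0_of _ ⟨a0, b0, hab, by rw [key]; exact hw⟩ ?_
  · intro a b hab'
    rw [key]
    exact mul_nonneg (mul_nonneg (hs a) (hs b)) (hE.2 a b hab')

lemma joinedIn_seg {n : ℕ} {F : Set (Matrix (Fin 2) (Fin n) ℝ)} (c : ℝ → Fin n → Fin 2 → ℝ)
    (hcont : Continuous fun t => cm (c t))
    (hmem : ∀ t : ℝ, 0 ≤ t → t ≤ 1 → cm (c t) ∈ F) : JoinedIn F (cm (c 0)) (cm (c 1)) := by
  refine ⟨⟨⟨fun t => cm (c (t : ℝ)), hcont.comp continuous_subtype_val⟩, by simp, by simp⟩,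
    fun t => hmem t t.2.1 t.2.2⟩

end

noncomputable section

lemma isPathConnected_R0 {n : ℕ} (hn : 2 ≤ n) : IsPathConnected (R0 n) := by
  classical
  set i0 : Fin n := ⟨0, by omega⟩ with hi0
  set i1 : Fin n := ⟨1, by omega⟩ with hi1
  have hi01 : i0 < i1 := by simp [hi0, hi1, Fin.lt_def]
  set c7 : Fin n → Fin 2 → ℝ :=
    fun j => (if j = i0 then (1:ℝ) else 0) • e1 + (if j = i1 then (1:ℝ) else 0) • e2 with hc7
  have hE0 : cm c7 ∈ R0 n := by
    refine wedge_mem (x := e1) (y := e2) (fun j => rfl) (by simp)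
      (fun j => by split <;> norm_num) (fun j => by split <;> norm_num)
      (fun a b hab => ?_) hi01 ?_
    · by_cases hb : b = i0
      · subst hb
        exact absurd hab (by simp [Fin.lt_def, hi0, Fin.not_lt])
      · simp [hb]
    · simp [hi01.ne, hi01.ne']
  refine ⟨cm c7, hE0, ?_⟩
  intro E hE
  refine JoinedIn.symm ?_
  obtain ⟨i, j, hij⟩ := (rank_eq_two_iff E).mp hE.1
  have hplsymm : ∀ a b : Fin n, pluck E a b = -pluck E b a := by
    intro a b; simp [pluck]
  obtain ⟨p, q, hpq, hpl⟩ : ∃ p q : Fin n, p < q ∧ pluck E p q ≠ 0 := by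
    rcases lt_trichotomy i j with h | h | h
    · exact ⟨i, j, h, hij⟩
    · exact absurd (show pluck E i j = 0 by rw [h]; simp [pluck]) hij
    · exact ⟨j, i, h, by rw [hplsymm]; simpa using hij⟩
  have hd : 0 < pluck E p q := lt_of_le_of_ne (hE.2 p q hpq) (Ne.symm hpl)
  set u : Fin 2 → ℝ := fun i => E i p with hu
  set v : Fin 2 → ℝ := fun i => E i q with hv
  have hcuv : cross u v = pluck E p q := rfl
  have hu2 : 0 < u 0 ^ 2 + u 1 ^ 2 := by
    rcases eq_or_ne (u 0) 0 with h0 | h0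
    · rcases eq_or_ne (u 1) 0 with h1 | h1
      · exfalso
        have : cross u v = 0 := by simp [cross, h0, h1]
        rw [hcuv] at this
        exact hpl this
      · have := sq_nonneg (u 0); have := pow_pos (abs_pos.mpr h1) 2
        nlinarith [sq_abs (u 1)]
    · have := sq_nonneg (u 1); have := pow_pos (abs_pos.mpr h0) 2
      nlinarith [sq_abs (u 0)]
  have hne : p ≠ q := hpq.ne
  have h0p : i0 ≤ p := by simp [hi0, Fin.le_def]
  have h0q : i0 < q := lt_of_le_of_lt h0p hpq
  set M1 : Matrix (Fin 2) (Fin n) ℝ :=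
    cm (fun j => if j = p then u else if j = q then v else 0) with hM1
  set M2 : Matrix (Fin 2) (Fin n) ℝ :=
    cm (fun j => if j = p then u else if j = q then perp u else 0) with hM2
  have J1 : JoinedIn (R0 n) E M1 := by
    have hcont : Continuous fun t : ℝ =>
        cm (fun j i => (if j = p ∨ j = q then (1:ℝ) else 1 - t) * E i j) := by
      refine continuous_matrix fun i j => ?_
      by_cases h : j = p ∨ j = q <;> simp only [cm, Matrix.of_apply, h, if_true, if_false] <;>
        fun_prop
    have h := joinedIn_seg (F := R0 n)
      (fun t j i => (if j = p ∨ j = q then (1:ℝ) else 1 - t) * E i j) hcont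
      (fun t ht0 ht1 => scale_mem hE (fun j i => rfl)
        (fun j => by by_cases h : j = p ∨ j = q <;> simp [h] <;> linarith) hpq
        (by simp [hpl]))
    convert h using 1
    · ext i j
      by_cases h : j = p ∨ j = q <;> simp [cm, h]
    · ext i j
      rcases eq_or_ne j p with rfl | h1
      · simp [cm, hM1, hu]
      · rcases eq_or_ne j q with rfl | h2
        · simp [cm, hM1, hv, h1]
        · simp [cm, hM1, h1, h2]
  have J2 : JoinedIn (R0 n) M1 M2 := by
    have hcont : Continuous fun t : ℝ =>
        cm (fun j => if j = p then u else if j = q then ((1 - t) • v + t • perp u) else 0) := by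
      refine continuous_matrix fun i j => ?_
      rcases eq_or_ne j p with rfl | h1
      · simp only [cm, Matrix.of_apply, if_pos rfl]
        exact continuous_const
      rcases eq_or_ne j q with rfl | h2
      · simp only [cm, Matrix.of_apply, if_neg h1, eq_self_iff_true, if_true, Pi.add_apply,
          Pi.smul_apply, smul_eq_mul]
        fun_prop
      · simp only [cm, Matrix.of_apply, if_neg h1, if_neg h2, Pi.zero_apply]
        exact continuous_const
    have h := joinedIn_seg (F := R0 n)
      (fun t j => if j = p then u else if j = q then ((1 - t) • v + t • perp u) else 0) hcont
      (fun t ht0 ht1 => ?_)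
    · convert h using 1
      · ext i j
        rcases eq_or_ne j p with rfl | h1
        · simp [cm, hM1]
        · rcases eq_or_ne j q with rfl | h2
          · simp [cm, hM1, h1]
          · simp [cm, hM1, h1, h2]
      · ext i j
        rcases eq_or_ne j p with rfl | h1
        · simp [cm, hM2]
        · rcases eq_or_ne j q with rfl | h2
          · simp [cm, hM2, h1]
          · simp [cm, hM2, h1, h2]
    · have hxy : 0 < cross u ((1 - t) • v + t • perp u) := by
        have hcalc : cross u ((1 - t) • v + t • perp u)
            = (1 - t) * cross u v + t * (u 0 ^ 2 + u 1 ^ 2) := by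
          simp [cross, perp]
          ring
        rw [hcalc, hcuv]
        rcases eq_or_lt_of_le ht1 with rfl | hlt
        · simpa using hu2
        · have := mul_pos (by linarith : (0:ℝ) < 1 - t) hd
          nlinarith
      refine wedge_mem (x := u) (y := (1 - t) • v + t • perp u)
        (α := fun j => if j = p then 1 else 0) (β := fun j => if j = q then 1 else 0)
        (fun j => ?_) hxy.le (fun j => by by_cases h : j = p <;> simp [h])
        (fun j => by by_cases h : j = q <;> simp [h])
        (fun a b hab => ?_) hpq (by simp [hne]; exact hxy.ne')
      · rcases eq_or_ne j p with rfl | h1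
        · simp [hne]
        · rcases eq_or_ne j q with rfl | h2
          · simp [h1]
          · simp [h1, h2]
      · rcases eq_or_ne a q with rfl | h1
        · rcases eq_or_ne b p with rfl | h2
          · exact absurd (hab.trans hpq) (lt_irrefl _)
          · simp [h2]
        · simp [h1]
  -- J3 : rotate (u, perp u) to (e1, e2) through complex exponentials
  set M3 : Matrix (Fin 2) (Fin n) ℝ :=
    cm (fun j => if j = p then e1 else if j = q then e2 else 0) with hM3
  set z0 : ℂ := (u 0 : ℂ) + (u 1 : ℂ) * Complex.I with hz0def
  have hz0 : z0 ≠ 0 := by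
    intro h
    have h0 : u 0 = 0 := by simpa [hz0def] using congrArg Complex.re h
    have h1 : u 1 = 0 := by simpa [hz0def] using congrArg Complex.im h
    rw [h0, h1] at hu2
    norm_num at hu2
  set g : ℝ → ℂ := fun t => Complex.exp (((1 : ℂ) - (t : ℂ)) * Complex.log z0) with hgdef
  set wv : ℝ → Fin 2 → ℝ := fun t => ![(g t).re, (g t).im] with hwv
  have hg0 : g 0 = z0 := by
    simp only [hgdef, Complex.ofReal_zero, sub_zero, one_mul]
    exact Complex.exp_log hz0
  have hg1 : g 1 = 1 := by
    simp [hgdef]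
  have hw0 : wv 0 = u := by
    funext k
    fin_cases k <;> simp [hwv, hg0, hz0def]
  have hw1 : wv 1 = e1 := by
    funext k
    fin_cases k <;> simp [hwv, hg1, e1]
  have hperp1 : perp (wv 1) = e2 := by
    rw [hw1]
    funext k
    fin_cases k <;> simp [perp, e1, e2]
  have hgc : Continuous g :=
    Complex.continuous_exp.comp ((continuous_const.sub Complex.continuous_ofReal).mul
      continuous_const)
  have hre : Continuous fun t => (g t).re := Complex.continuous_re.comp hgc
  have him : Continuous fun t => (g t).im := Complex.continuous_im.comp hgc
  have hwpos : ∀ t : ℝ, 0 < cross (wv t) (perp (wv t)) := by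
    intro t
    have h := Complex.normSq_pos.mpr (show g t ≠ 0 from Complex.exp_ne_zero _)
    rw [Complex.normSq_apply] at h
    rw [cross_perp]
    simp only [hwv, Matrix.cons_val_zero, Matrix.cons_val_one, Matrix.head_cons]
    nlinarith [h]
  have J3 : JoinedIn (R0 n) M2 M3 := by
    have hcont : Continuous fun t : ℝ =>
        cm (fun j => if j = p then wv t else if j = q then perp (wv t) else 0) := by
      refine continuous_matrix fun i j => ?_
      rcases eq_or_ne j p with rfl | h1
      · simp only [cm, Matrix.of_apply, eq_self_iff_true, if_true]
        fin_cases i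
        · simpa [hwv] using hre
        · simpa [hwv] using him
      rcases eq_or_ne j q with rfl | h2
      · simp only [cm, Matrix.of_apply, if_neg h1, eq_self_iff_true, if_true]
        fin_cases i
        · simp [perp, hwv]; exact him.neg
        · simpa [perp, hwv] using hre
      · simp only [cm, Matrix.of_apply, if_neg h1, if_neg h2, Pi.zero_apply]
        exact continuous_const
    have h := joinedIn_seg (F := R0 n)
      (fun t j => if j = p then wv t else if j = q then perp (wv t) else 0) hcont
      (fun t ht0 ht1 => ?_)
    · convert h using 1
      · ext i j
        rcases eq_or_ne j p with rfl | h1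
        · simp [cm, hM2, hw0]
        · rcases eq_or_ne j q with rfl | h2
          · simp [cm, hM2, h1, hw0]
          · simp [cm, hM2, h1, h2]
      · ext i j
        rcases eq_or_ne j p with rfl | h1
        · simp [cm, hM3, hw1]
        · rcases eq_or_ne j q with rfl | h2
          · simp [cm, hM3, h1, hperp1]
          · simp [cm, hM3, h1, h2]
    · refine wedge_mem (x := wv t) (y := perp (wv t))
        (α := fun j => if j = p then 1 else 0) (β := fun j => if j = q then 1 else 0)
        (fun j => ?_) (hwpos t).le (fun j => by by_cases h : j = p <;> simp [h])
        (fun j => by by_cases h : j = q <;> simp [h])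
        (fun a b hab => ?_) hpq (by simp [hne]; exact (hwpos t).ne')
      · rcases eq_or_ne j p with rfl | h1
        · simp [hne]
        · rcases eq_or_ne j q with rfl | h2
          · simp [h1]
          · simp [h1, h2]
      · rcases eq_or_ne a q with rfl | h1
        · rcases eq_or_ne b p with rfl | h2
          · exact absurd (hab.trans hpq) (lt_irrefl _)
          · simp [h2]
        · simp [h1]
  -- J4 : grow column i0
  set M4 : Matrix (Fin 2) (Fin n) ℝ :=
    cm (fun j => if j = i0 then e1 else if j = p then e1 else if j = q then e2 else 0) with hM4
  have J4 : JoinedIn (R0 n) M3 M4 := by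
    have hcont : Continuous fun t : ℝ =>
        cm (fun j => if j = i0 then (if p = i0 then (1:ℝ) else t) • e1
          else if j = p then e1 else if j = q then e2 else 0) := by
      refine continuous_matrix fun i j => ?_
      rcases eq_or_ne j i0 with rfl | h1
      · simp only [cm, Matrix.of_apply, eq_self_iff_true, if_true, Pi.smul_apply, smul_eq_mul]
        by_cases hp : p = i0 <;> simp only [hp, if_true, if_false] <;> fun_prop
      · simp only [cm, Matrix.of_apply, if_neg h1]
        exact continuous_const
    have h := joinedIn_seg (F := R0 n)
      (fun t j => if j = i0 then (if p = i0 then (1:ℝ) else t) • e1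
        else if j = p then e1 else if j = q then e2 else 0) hcont
      (fun t ht0 ht1 => ?_)
    · convert h using 1
      · ext i j
        rcases eq_or_ne j i0 with rfl | h1
        · by_cases hp : p = i0 <;>
            simp [cm, hM3, hp, h0q.ne, h0q.ne', eq_comm (a := i0) (b := p)]
        · simp [cm, hM3, h1]
      · ext i j
        rcases eq_or_ne j i0 with rfl | h1
        · by_cases hp : p = i0 <;> simp [cm, hM4, hp]
        · simp [cm, hM4, h1]
    · refine wedge_mem (x := e1) (y := e2)
        (α := fun j => if j = i0 then (if p = i0 then (1:ℝ) else t) else if j = p then 1 else 0)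
        (β := fun j => if j = q then 1 else 0)
        (fun j => ?_) (by simp)
        (fun j => by
          rcases eq_or_ne j i0 with rfl | h1
          · by_cases hp : p = i0
            · simp [hp]
            · simp [hp]
              linarith
          · rcases eq_or_ne j p with rfl | h2
            · simp [h1]
            · simp [h1, h2])
        (fun j => by by_cases h : j = q <;> simp [h])
        (fun a b hab => ?_) hpq ?_
      · rcases eq_or_ne j i0 with rfl | h1
        · simp [h0q.ne, h0q.ne']
        · rcases eq_or_ne j p with rfl | h2
          · simp [h1, hne]
          · rcases eq_or_ne j q with rfl | h3
            · simp [h1, h2]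
            · simp [h1, h2, h3]
      · rcases eq_or_ne a q with rfl | h1
        · rcases eq_or_ne b i0 with rfl | hb1
          · exact absurd hab (lt_asymm h0q)
          · rcases eq_or_ne b p with rfl | hb2
            · exact absurd hab (lt_asymm hpq)
            · simp [hb1, hb2]
        · simp [h1]
      · by_cases hp : p = i0 <;> simp [hp, hne]
  -- J5 : shrink column p
  set M5 : Matrix (Fin 2) (Fin n) ℝ :=
    cm (fun j => if j = i0 then e1 else if j = q then e2 else 0) with hM5
  have J5 : JoinedIn (R0 n) M4 M5 := by
    have hcont : Continuous fun t : ℝ =>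
        cm (fun j => if j = i0 then e1 else if j = q then e2
          else if j = p then (1 - t) • e1 else 0) := by
      refine continuous_matrix fun i j => ?_
      rcases eq_or_ne j i0 with rfl | h1
      · simp only [cm, Matrix.of_apply, eq_self_iff_true, if_true]
        exact continuous_const
      rcases eq_or_ne j q with rfl | h2
      · simp only [cm, Matrix.of_apply, if_neg h1, eq_self_iff_true, if_true]
        exact continuous_const
      rcases eq_or_ne j p with rfl | h3
      · simp only [cm, Matrix.of_apply, if_neg h1, if_neg h2, eq_self_iff_true, if_true,
          Pi.smul_apply, smul_eq_mul]
        fun_prop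
      · simp only [cm, Matrix.of_apply, if_neg h1, if_neg h2, if_neg h3, Pi.zero_apply]
        exact continuous_const
    have h := joinedIn_seg (F := R0 n)
      (fun t j => if j = i0 then e1 else if j = q then e2
        else if j = p then (1 - t) • e1 else 0) hcont
      (fun t ht0 ht1 => ?_)
    · convert h using 1
      · ext i j
        rcases eq_or_ne j i0 with rfl | h1
        · simp [cm, hM4]
        · rcases eq_or_ne j q with rfl | h2
          · simp [cm, hM4, h1, hne.symm]
          · rcases eq_or_ne j p with rfl | h3
            · simp [cm, hM4, h1, h2]
            · simp [cm, hM4, h1, h2, h3]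
      · ext i j
        rcases eq_or_ne j i0 with rfl | h1
        · simp [cm, hM5]
        · rcases eq_or_ne j q with rfl | h2
          · simp [cm, hM5, h1]
          · rcases eq_or_ne j p with rfl | h3
            · simp [cm, hM5, h1, h2]
            · simp [cm, hM5, h1, h2, h3]
    · refine wedge_mem (x := e1) (y := e2)
        (α := fun j => if j = i0 then 1 else if j = p then 1 - t else 0)
        (β := fun j => if j = q then 1 else 0)
        (fun j => ?_) (by simp)
        (fun j => by
          rcases eq_or_ne j i0 with rfl | h1
          · simp
          · rcases eq_or_ne j p with rfl | h2
            · simp [h1]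
              linarith
            · simp [h1, h2])
        (fun j => by by_cases h : j = q <;> simp [h])
        (fun a b hab => ?_) h0q (by simp [h0q.ne'])
      · rcases eq_or_ne j i0 with rfl | h1
        · simp [h0q.ne, h0q.ne']
        · rcases eq_or_ne j q with rfl | h2
          · simp [h1, hne.symm]
          · rcases eq_or_ne j p with rfl | h3
            · simp [h1, h2]
            · simp [h1, h2, h3]
      · rcases eq_or_ne a q with rfl | h1
        · rcases eq_or_ne b i0 with rfl | hb1
          · exact absurd hab (lt_asymm h0q)
          · rcases eq_or_ne b p with rfl | hb2
            · exact absurd hab (lt_asymm hpq)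
            · simp [hb1, hb2]
        · simp [h1]
  -- J6 : grow column i1
  set M6 : Matrix (Fin 2) (Fin n) ℝ :=
    cm (fun j => if j = i0 then e1 else if j = i1 then e2 else if j = q then e2 else 0) with hM6
  have J6 : JoinedIn (R0 n) M5 M6 := by
    have hcont : Continuous fun t : ℝ =>
        cm (fun j => if j = i0 then e1 else if j = i1 then (if q = i1 then (1:ℝ) else t) • e2
          else if j = q then e2 else 0) := by
      refine continuous_matrix fun i j => ?_
      rcases eq_or_ne j i0 with rfl | h1
      · simp only [cm, Matrix.of_apply, eq_self_iff_true, if_true]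
        exact continuous_const
      rcases eq_or_ne j i1 with rfl | h2
      · simp only [cm, Matrix.of_apply, if_neg h1, eq_self_iff_true, if_true, Pi.smul_apply,
          smul_eq_mul]
        by_cases hq : q = i1 <;> simp only [hq, if_true, if_false] <;> fun_prop
      · simp only [cm, Matrix.of_apply, if_neg h1, if_neg h2]
        exact continuous_const
    have h := joinedIn_seg (F := R0 n)
      (fun t j => if j = i0 then e1 else if j = i1 then (if q = i1 then (1:ℝ) else t) • e2
        else if j = q then e2 else 0) hcont
      (fun t ht0 ht1 => ?_)
    · convert h using 1
      · ext i j
        rcases eq_or_ne j i0 with rfl | h1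
        · simp [cm, hM5]
        · rcases eq_or_ne j i1 with rfl | h2
          · by_cases hq : q = i1 <;>
              simp [cm, hM5, h1, hq, eq_comm (a := i1) (b := q)]
          · rcases eq_or_ne j q with rfl | h3
            · simp [cm, hM5, h1, h2]
            · simp [cm, hM5, h1, h2, h3]
      · ext i j
        rcases eq_or_ne j i0 with rfl | h1
        · simp [cm, hM6]
        · rcases eq_or_ne j i1 with rfl | h2
          · by_cases hq : q = i1 <;> simp [cm, hM6, h1, hq]
          · simp [cm, hM6, h1, h2]
    · refine wedge_mem (x := e1) (y := e2)
        (α := fun j => if j = i0 then 1 else 0)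
        (β := fun j => if j = i1 then (if q = i1 then (1:ℝ) else t) else if j = q then 1 else 0)
        (fun j => ?_) (by simp)
        (fun j => by by_cases h : j = i0 <;> simp [h])
        (fun j => by
          rcases eq_or_ne j i1 with rfl | h1
          · by_cases hq : q = i1
            · simp [hq]
            · simp [hq]
              linarith
          · rcases eq_or_ne j q with rfl | h2
            · simp [h1]
            · simp [h1, h2])
        (fun a b hab => ?_) h0q ?_
      · rcases eq_or_ne j i0 with rfl | h1
        · simp [hi01.ne, h0q.ne, h0q.ne']
        · rcases eq_or_ne j i1 with rfl | h2
          · simp [h1]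
          · rcases eq_or_ne j q with rfl | h3
            · simp [h1, h2]
            · simp [h1, h2, h3]
      · rcases eq_or_ne b i0 with rfl | hb1
        · exact absurd hab (by simp [Fin.lt_def, hi0, Fin.not_lt])
        · simp [hb1]
      · by_cases hq : q = i1 <;> simp [hq, h0q.ne, h0q.ne', hi01.ne]
  -- J7 : shrink column q
  have J7 : JoinedIn (R0 n) M6 (cm c7) := by
    have hcont : Continuous fun t : ℝ =>
        cm (fun j => if j = i0 then e1 else if j = i1 then e2
          else if j = q then (1 - t) • e2 else 0) := by
      refine continuous_matrix fun i j => ?_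
      rcases eq_or_ne j i0 with rfl | h1
      · simp only [cm, Matrix.of_apply, eq_self_iff_true, if_true]
        exact continuous_const
      rcases eq_or_ne j i1 with rfl | h2
      · simp only [cm, Matrix.of_apply, if_neg h1, eq_self_iff_true, if_true]
        exact continuous_const
      rcases eq_or_ne j q with rfl | h3
      · simp only [cm, Matrix.of_apply, if_neg h1, if_neg h2, eq_self_iff_true, if_true,
          Pi.smul_apply, smul_eq_mul]
        fun_prop
      · simp only [cm, Matrix.of_apply, if_neg h1, if_neg h2, if_neg h3, Pi.zero_apply]
        exact continuous_const
    have h := joinedIn_seg (F := R0 n)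
      (fun t j => if j = i0 then e1 else if j = i1 then e2
        else if j = q then (1 - t) • e2 else 0) hcont
      (fun t ht0 ht1 => ?_)
    · convert h using 1
      · ext i j
        rcases eq_or_ne j i0 with rfl | h1
        · simp [cm, hM6]
        · rcases eq_or_ne j i1 with rfl | h2
          · simp [cm, hM6, h1]
          · rcases eq_or_ne j q with rfl | h3
            · simp [cm, hM6, h1, h2]
            · simp [cm, hM6, h1, h2, h3]
      · ext i j
        rcases eq_or_ne j i0 with rfl | h1
        · simp [cm, hc7, hi01.ne]
        · rcases eq_or_ne j i1 with rfl | h2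
          · simp [cm, hc7, h1]
          · rcases eq_or_ne j q with rfl | h3
            · simp [cm, hc7, h1, h2]
            · simp [cm, hc7, h1, h2, h3]
    · refine wedge_mem (x := e1) (y := e2)
        (α := fun j => if j = i0 then 1 else 0)
        (β := fun j => if j = i1 then 1 else if j = q then 1 - t else 0)
        (fun j => ?_) (by simp)
        (fun j => by by_cases h : j = i0 <;> simp [h])
        (fun j => by
          rcases eq_or_ne j i1 with rfl | h1
          · simp
          · rcases eq_or_ne j q with rfl | h2
            · simp [h1]
              linarith
            · simp [h1, h2])
        (fun a b hab => ?_) hi01 (by simp [hi01.ne, hi01.ne'])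
      · rcases eq_or_ne j i0 with rfl | h1
        · simp [hi01.ne, h0q.ne, h0q.ne']
        · rcases eq_or_ne j i1 with rfl | h2
          · simp [h1]
          · rcases eq_or_ne j q with rfl | h3
            · simp [h1, h2]
            · simp [h1, h2, h3]
      · rcases eq_or_ne b i0 with rfl | hb1
        · exact absurd hab (by simp [Fin.lt_def, hi0, Fin.not_lt])
        · simp [hb1]
  exact J1.trans (J2.trans (J3.trans (J4.trans (J5.trans (J6.trans J7)))))

end


/-- oriented regions are nonempty and connected: for any word and any
choice of signs `ε : {1,…,n} → {−1,+1}`, the oriented region `R(ε_{i₁}i₁,…,ε_{iₙ}iₙ)` is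
a nonempty connected subset of the space of real `2×n` matrices. -/
theorem statement15 {n : ℕ} (hn : 2 ≤ n)
    (w : Equiv.Perm (Fin n)) (ε : Fin n → ℝ) (hε : ∀ i, ε i = 1 ∨ ε i = -1) :
    IsConnected (OSD.orientedRegion w ε) := by
  classical
  have hpc : IsPathConnected (R0 n) := isPathConnected_R0 hn
  have hε0 : ∀ k, ε k ≠ 0 := fun k => by rcases hε k with h | h <;> rw [h] <;> norm_num
  have hε1 : ∀ k, ε k * ε k = 1 := fun k => by rcases hε k with h | h <;> rw [h] <;> norm_num
  have hcontΨ : Continuous fun E : Matrix (Fin 2) (Fin n) ℝ =>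
      (Matrix.of fun i j => ε j * E i (w⁻¹ j) : Matrix (Fin 2) (Fin n) ℝ) :=
    continuous_matrix fun i j => continuous_const.mul (continuous_id.matrix_elem i (w⁻¹ j))
  have himg : OSD.orientedRegion w ε
      = (fun E : Matrix (Fin 2) (Fin n) ℝ =>
          (Matrix.of fun i j => ε j * E i (w⁻¹ j) : Matrix (Fin 2) (Fin n) ℝ)) '' R0 n := by
    ext C
    constructor
    · rintro ⟨hrank, hcond⟩
      refine ⟨Matrix.of fun i a => ε (w a) * C i (w a), ⟨?_, ?_⟩, ?_⟩
      · rw [rank_eq_two_iff]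
        obtain ⟨i, j, hij⟩ := (rank_eq_two_iff C).mp hrank
        refine ⟨w⁻¹ i, w⁻¹ j, ?_⟩
        have hkey : pluck (Matrix.of fun i a => ε (w a) * C i (w a)) (w⁻¹ i) (w⁻¹ j)
            = ε i * ε j * pluck C i j := by
          simp [pluck, Equiv.Perm.coe_inv, Equiv.apply_symm_apply]
          ring
        rw [hkey]
        exact mul_ne_zero (mul_ne_zero (hε0 i) (hε0 j)) hij
      · intro a b hab
        have hkey : pluck (Matrix.of fun i a => ε (w a) * C i (w a)) a b
            = ε (w a) * ε (w b) * pluck C (w a) (w b) := by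
          simp [pluck]
          ring
        rw [hkey]
        exact hcond a b hab
      · ext i j
        simp only [Matrix.of_apply, Equiv.Perm.coe_inv, Equiv.apply_symm_apply]
        rw [← mul_assoc, hε1 j, one_mul]
    · rintro ⟨F, ⟨hr, hc⟩, rfl⟩
      constructor
      · rw [rank_eq_two_iff]
        obtain ⟨i, j, hij⟩ := (rank_eq_two_iff F).mp hr
        refine ⟨w i, w j, ?_⟩
        have hkey : pluck (Matrix.of fun i j => ε j * F i (w⁻¹ j)) (w i) (w j)
            = ε (w i) * ε (w j) * pluck F i j := by
          simp [pluck, Equiv.Perm.coe_inv, Equiv.symm_apply_apply]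
          ring
        rw [hkey]
        exact mul_ne_zero (mul_ne_zero (hε0 _) (hε0 _)) hij
      · intro a b hab
        have hkey : pluck (Matrix.of fun i j => ε j * F i (w⁻¹ j)) (w a) (w b)
            = ε (w a) * ε (w b) * pluck F a b := by
          simp [pluck, Equiv.Perm.coe_inv, Equiv.symm_apply_apply]
          ring
        rw [hkey]
        nlinarith [hc a b hab, mul_nonneg (sq_nonneg (ε (w a) * ε (w b))) (hc a b hab)]
  rw [himg]
  exact (hpc.image hcontΨ).isConnected
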